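/- Let A be a dg-algebra and let x_• and y_• be homotopic twisting n-sequences in A. Then their extension obstruction classes agree: o_n(x_•) = o_n(y_•) in H^{2n+2}(A). -/

import Mathlib

/-!
Encode the sequences as power series `X = ∑ xₘ tᵐ`, `Y`, `H` over `A`, with `d` acting on
coefficients. The twisting and homotopy relations say that `dX + X²`, `dY + Y²` and
`Y - X + dH + (YH - HX)` vanish below degree `n`, and the obstruction is the `tⁿ`-coefficient of
`X²`. By the graded Leibniz rule `d(HX - YH) = dH X + H dX - (dY H - Y dH)`, and a ring identity
rewrites this as `X² - Y²` plus products of those defects with `X`, `Y` or `H`. As `X`, `Y`, `H`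
have no constant term, these products vanish up to degree `n`, so `c` is the `tⁿ`-coefficient of
`HX - YH`.
-/

/-- A differential graded algebra over `ℤ`. -/
structure DGA where
  A : Type
  [ringA : Ring A]
  grading : ℤ → AddSubgroup A
  mul_mem : ∀ {m n : ℤ} {a b : A}, a ∈ grading m → b ∈ grading n → a * b ∈ grading (m + n)
  d : A →+ A
  d_sq : ∀ a : A, d (d a) = 0
  d_mem : ∀ {m : ℤ} {a : A}, a ∈ grading m → d a ∈ grading (m + 1)
  leibniz : ∀ {m : ℤ} {a : A}, a ∈ grading m → ∀ b : A,
      d (a * b) = d a * b + (((-1 : ℤˣ) ^ m : ℤˣ) : ℤ) • (a * d b)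

attribute [instance] DGA.ringA

/-- A twisting `n`-sequence `(x_3, …, x_{2n−1})`: `x m ∈ A^{2m+1}` for `1 ≤ m < n` and the
twisting relations hold for all `m < n`. -/
def IsTwistingNSeq (G : DGA) (n : ℕ) (x : ℕ → G.A) : Prop :=
  x 0 = 0 ∧ (∀ m : ℕ, x m ∈ G.grading (2 * (m : ℤ) + 1)) ∧
    ∀ m : ℕ, 1 ≤ m → m < n →
      G.d (x m) + ∑ i ∈ Finset.Ioo 0 m, x i * x (m - i) = 0

/-- An `n`-homotopy `h_• : x_• → y_•` between twisting `n`-sequences. -/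
def IsNHomotopy (G : DGA) (n : ℕ) (x y h : ℕ → G.A) : Prop :=
  h 0 = 0 ∧ (∀ m : ℕ, h m ∈ G.grading (2 * (m : ℤ))) ∧
    ∀ m : ℕ, 1 ≤ m → m < n →
      y m - x m + G.d (h m) +
        ∑ i ∈ Finset.Ioo 0 m, (y (m - i) * h i - h i * x (m - i)) = 0

open Finset PowerSeries

theorem Finset.Nat.sum_antidiagonal_eq_sum_Ioo {M : Type*} [AddCommMonoid M] (f : ℕ → ℕ → M)
    (hf₁ : ∀ j, f 0 j = 0) (hf₂ : ∀ i, f i 0 = 0) (n : ℕ) :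
    ∑ p ∈ antidiagonal n, f p.1 p.2 = ∑ i ∈ Ioo 0 n, f i (n - i) := by
  rw [Nat.sum_antidiagonal_eq_sum_range_succ]
  refine (sum_subset (fun i hi => ?_) fun i hi hi' => ?_).symm
  · simp only [mem_Ioo, mem_range] at hi ⊢
    omega
  · simp only [mem_Ioo, mem_range, not_and_or, not_lt] at hi hi'
    obtain rfl | rfl : i = 0 ∨ i = n := by omega
    · exact hf₁ _
    · simpa using hf₂ _

namespace PowerSeries

variable {R : Type*} [Semiring R]

theorem coeff_mk_mul_mk {f g : ℕ → R} (hf : f 0 = 0) (hg : g 0 = 0) (n : ℕ) :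
    coeff n (mk f * mk g) = ∑ i ∈ Ioo 0 n, f i * g (n - i) := by
  simpa only [coeff_mul, coeff_mk] using
    Nat.sum_antidiagonal_eq_sum_Ioo (fun i j => f i * g j) (by simp [hf]) (by simp [hg]) n

theorem coeff_mk_mul_mk' {f g : ℕ → R} (hf : f 0 = 0) (hg : g 0 = 0) (n : ℕ) :
    coeff n (mk f * mk g) = ∑ i ∈ Ioo 0 n, f (n - i) * g i := by
  rw [coeff_mul, ← Nat.sum_antidiagonal_swap]
  simpa only [Prod.fst_swap, Prod.snd_swap, coeff_mk] using
    Nat.sum_antidiagonal_eq_sum_Ioo (fun i j => f j * g i) (by simp [hg]) (by simp [hf]) n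

theorem coeff_mul_eq_zero_of_le_order {n : ℕ} {φ ψ : R⟦X⟧} (hφ : n ≤ φ.order)
    (hψ : constantCoeff ψ = 0) : coeff n (φ * ψ) = 0 ∧ coeff n (ψ * φ) = 0 := by
  have hψ' : 1 ≤ ψ.order := one_le_order_iff_constCoeff_eq_zero.2 hψ
  have hn : (n : ℕ∞) < n + 1 := by exact_mod_cast n.lt_succ_self
  constructor <;> refine coeff_of_lt_order n (hn.trans_le ?_)
  · exact (add_le_add hφ hψ').trans (le_order_mul φ ψ)
  · rw [add_comm]
    exact (add_le_add hψ' hφ).trans (le_order_mul ψ φ)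

end PowerSeries

theorem twisting_defect_identity {R : Type*} [Ring R] (X Y H dX dY dH : R) :
    dH * X + H * dX - (dY * H - Y * dH) =
      X * X - Y * Y + ((Y - X + dH + (Y * H - H * X)) * X + H * (dX + X * X) -
        (dY + Y * Y) * H + Y * (Y - X + dH + (Y * H - H * X))) := by
  noncomm_ring

namespace DGA

variable (G : DGA)

theorem d_mul_of_mem_even {k : ℤ} {a : G.A} (ha : a ∈ G.grading (2 * k)) (b : G.A) :
    G.d (a * b) = G.d a * b + a * G.d b := by
  rw [G.leibniz ha, (even_two_mul k).neg_one_zpow, Units.val_one, one_zsmul]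

theorem d_mul_of_mem_odd {k : ℤ} {a : G.A} (ha : a ∈ G.grading (2 * k + 1)) (b : G.A) :
    G.d (a * b) = G.d a * b - a * G.d b := by
  rw [G.leibniz ha, (odd_two_mul_add_one k).neg_one_zpow, Units.val_neg, Units.val_one,
    neg_one_zsmul, sub_eq_add_neg]

noncomputable def dSeries : G.A⟦X⟧ →+ G.A⟦X⟧ where
  toFun P := PowerSeries.mk fun m => G.d (coeff m P)
  map_zero' := by ext; simp
  map_add' P Q := by ext; simp

@[simp]
theorem coeff_dSeries (P : G.A⟦X⟧) (m : ℕ) : coeff m (G.dSeries P) = G.d (coeff m P) :=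
  coeff_mk m (fun m => G.d (coeff m P))

variable {G}

theorem dSeries_mul_of_even {P : G.A⟦X⟧} (hP : ∀ m, ∃ k : ℤ, coeff m P ∈ G.grading (2 * k))
    (Q : G.A⟦X⟧) : G.dSeries (P * Q) = G.dSeries P * Q + P * G.dSeries Q := by
  ext m
  simp only [coeff_dSeries, map_add, coeff_mul, map_sum, ← sum_add_distrib]
  refine sum_congr rfl fun p _ => ?_
  obtain ⟨k, hk⟩ := hP p.1
  exact G.d_mul_of_mem_even hk _

theorem dSeries_mul_of_odd {P : G.A⟦X⟧} (hP : ∀ m, ∃ k : ℤ, coeff m P ∈ G.grading (2 * k + 1))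
    (Q : G.A⟦X⟧) : G.dSeries (P * Q) = G.dSeries P * Q - P * G.dSeries Q := by
  ext m
  simp only [coeff_dSeries, map_sub, coeff_mul, map_sum, ← sum_sub_distrib]
  refine sum_congr rfl fun p _ => ?_
  obtain ⟨k, hk⟩ := hP p.1
  exact G.d_mul_of_mem_odd hk _

theorem coeff_mul_mem_grading {P Q : G.A⟦X⟧} {p q : ℕ → ℤ} {n : ℕ} {k : ℤ}
    (hP : ∀ m, coeff m P ∈ G.grading (p m)) (hQ : ∀ m, coeff m Q ∈ G.grading (q m))
    (hpq : ∀ i j, i + j = n → p i + q j = k) : coeff n (P * Q) ∈ G.grading k := by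
  rw [coeff_mul]
  refine AddSubgroup.sum_mem _ fun ij hij => ?_
  rw [← hpq ij.1 ij.2 (mem_antidiagonal.1 hij)]
  exact G.mul_mem (hP _) (hQ _)

end DGA

theorem IsTwistingNSeq.le_order {G : DGA} {n : ℕ} {x : ℕ → G.A} (hx : IsTwistingNSeq G n x) :
    n ≤ (G.dSeries (mk x) + mk x * mk x).order := by
  obtain ⟨hx₀, -, hrel⟩ := hx
  refine nat_le_order _ _ fun m hm => ?_
  rw [map_add, DGA.coeff_dSeries, coeff_mk, coeff_mk_mul_mk hx₀ hx₀]
  rcases Nat.eq_zero_or_pos m with rfl | hm₀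
  · simp [hx₀]
  · exact hrel m hm₀ hm

theorem IsNHomotopy.le_order {G : DGA} {n : ℕ} {x y h : ℕ → G.A} (hx₀ : x 0 = 0) (hy₀ : y 0 = 0)
    (hh : IsNHomotopy G n x y h) :
    n ≤ (mk y - mk x + G.dSeries (mk h) + (mk y * mk h - mk h * mk x)).order := by
  obtain ⟨hh₀, -, hrel⟩ := hh
  refine nat_le_order _ _ fun m hm => ?_
  rw [map_add, map_add, map_sub, map_sub, DGA.coeff_dSeries, coeff_mk, coeff_mk, coeff_mk,
    coeff_mk_mul_mk' hy₀ hh₀, coeff_mk_mul_mk hh₀ hx₀, ← sum_sub_distrib]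
  rcases Nat.eq_zero_or_pos m with rfl | hm₀
  · simp [hx₀, hy₀, hh₀]
  · exact hrel m hm₀ hm

theorem obstruction_classes_of_homotopic_general (G : DGA) (n : ℕ)
    (x y h : ℕ → G.A)
    (hx : IsTwistingNSeq G n x) (hy : IsTwistingNSeq G n y)
    (hh : IsNHomotopy G n x y h) :
    ∃ c ∈ G.grading (2 * (n : ℤ) + 1),
      (∑ i ∈ Finset.Ioo 0 n, x i * x (n - i)) -
        (∑ i ∈ Finset.Ioo 0 n, y i * y (n - i)) = G.d c := by
  have hX : ∀ m : ℕ, coeff m (mk x) ∈ G.grading (2 * m + 1) := by simpa using hx.2.1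
  have hY : ∀ m : ℕ, coeff m (mk y) ∈ G.grading (2 * m + 1) := by simpa using hy.2.1
  have hH : ∀ m : ℕ, coeff m (mk h) ∈ G.grading (2 * m) := by simpa using hh.2.1
  have hX₀ : constantCoeff (mk x) = 0 := hx.1
  have hY₀ : constantCoeff (mk y) = 0 := hy.1
  have hH₀ : constantCoeff (mk h) = 0 := hh.1
  refine ⟨coeff n (mk h * mk x - mk y * mk h), ?_, ?_⟩
  · rw [map_sub]
    refine sub_mem (DGA.coeff_mul_mem_grading hH hX ?_) (DGA.coeff_mul_mem_grading hY hH ?_) <;>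
      (intro i j hij; omega)
  have defectX := (coeff_mul_eq_zero_of_le_order hx.le_order hH₀).2
  have defectY := (coeff_mul_eq_zero_of_le_order hy.le_order hH₀).1
  have defectHX := (coeff_mul_eq_zero_of_le_order (hh.le_order hx.1 hy.1) hX₀).1
  have defectHY := (coeff_mul_eq_zero_of_le_order (hh.le_order hx.1 hy.1) hY₀).2
  calc _ = coeff n (mk x * mk x - mk y * mk y) := by
        rw [map_sub, coeff_mk_mul_mk hx.1 hx.1, coeff_mk_mul_mk hy.1 hy.1]
    _ = coeff n (G.dSeries (mk h * mk x - mk y * mk h)) := by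
        rw [map_sub G.dSeries, DGA.dSeries_mul_of_even fun m => ⟨m, hH m⟩,
          DGA.dSeries_mul_of_odd fun m => ⟨m, hY m⟩, twisting_defect_identity]
        simp only [map_add, map_sub, defectX, defectY, defectHX, defectHY, sub_zero, add_zero]
    _ = _ := DGA.coeff_dSeries G _ n

/-- Homotopic twisting `n`-sequences have equal extension obstruction
classes `o_n(x_•) = [∑_{i+j=n} x_{2i+1} x_{2j+1}] ∈ H^{2n+2}(A)`: the difference of the
obstruction cocycles is the coboundary of an element of degree `2n+1`. -/
theorem obstruction_classes_of_homotopic (G : DGA) (n : ℕ) (hn : 1 ≤ n)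
    (x y h : ℕ → G.A)
    (hx : IsTwistingNSeq G n x) (hy : IsTwistingNSeq G n y)
    (hh : IsNHomotopy G n x y h) :
    ∃ c ∈ G.grading (2 * (n : ℤ) + 1),
      (∑ i ∈ Finset.Ioo 0 n, x i * x (n - i)) -
        (∑ i ∈ Finset.Ioo 0 n, y i * y (n - i)) = G.d c :=
  obstruction_classes_of_homotopic_general G n x y h hx hy hh
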